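/- arXiv:1602.06008 — 2 statements merged into one kernel-verified Lean document; each statement's English description precedes it below -/
import Mathlib

section
/- Let a₁, …, aₙ > 0 and define P : ℂⁿ × ℂⁿ → ℂ by P(z, z') = (∏ᵢ aᵢ/(2π)) · exp(−(1/4) Σᵢ aᵢ(|zᵢ|² + |z'ᵢ|² − 2 zᵢ·conj(z'ᵢ))). Then P is the reproducing kernel of an orthogonal projection on L²(ℂⁿ, Lebesgue): (i) ∫_{ℂⁿ} P(z, w) P(w, z') dw = P(z, z') for all z, z' ∈ ℂⁿ; (ii) conj(P(z, z')) = P(z', z); (iii) P(z, z) = ∏ᵢ aᵢ/(2π) > 0 for all z. -/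
/-!
The kernel is a product over coordinates of one-variable kernels, so everything reduces to
`n = 1`. There `P(z, w) P(w, z')` is a Gaussian in `w` with a linear term in `w` and one
in `w̄`; in real coordinates this is a product of two
one-dimensional Gaussians, and `∫ exp(-b|w|² + αw + βw̄) dw = (π/b) exp(αβ/b)`.
-/

open MeasureTheory Complex ComplexConjugate GaussianFourier
open scoped Real

theorem integral_cexp_neg_mul_sq_norm_add_mul_add_mul_conj {b : ℂ} (hb : 0 < b.re) (α β : ℂ) :
    ∫ w : ℂ, cexp (-b * ‖w‖ ^ 2 + α * w + β * conj w) = π / b * cexp (α * β / b) := by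
  rw [← volume_preserving_equiv_pi.symm.integral_comp measurableEquivPi.symm.measurableEmbedding]
  have hcoord : ∀ v : Fin 2 → ℝ,
      -b * ‖measurableEquivPi.symm v‖ ^ 2 + α * measurableEquivPi.symm v
        + β * conj (measurableEquivPi.symm v)
      = -b * ∑ i, (v i : ℂ) ^ 2 + ∑ i, ![α + β, (α - β) * I] i * v i := by
    intro v
    rw [measurableEquivPi_symm_apply, ← ofReal_pow, Complex.sq_norm, normSq_add_mul_I]
    simp only [Fin.sum_univ_two, map_add, map_mul, conj_ofReal, conj_I, Matrix.cons_val_zero,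
      Matrix.cons_val_one, Matrix.cons_val_fin_one]
    push_cast
    ring
  have hb0 : b ≠ 0 := fun h ↦ by simp [h] at hb
  have hdim : ((Fintype.card (Fin 2) : ℂ) / 2) = 1 := by simp
  simp_rw [hcoord, integral_cexp_neg_mul_sum_add hb, hdim, cpow_one, Fin.sum_univ_two]
  congr 2
  simp only [Matrix.cons_val_zero, Matrix.cons_val_one, Matrix.cons_val_fin_one]
  field_simp
  linear_combination (α - β) ^ 2 * I_sq

noncomputable def modelKernel (a : ℝ) (z z' : ℂ) : ℂ :=
  ((a / (2 * π) : ℝ) : ℂ) *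
    cexp (-(1 / 4 : ℂ) * ((a : ℂ) *
      (((‖z‖ : ℝ) : ℂ) ^ 2 + ((‖z'‖ : ℝ) : ℂ) ^ 2 - 2 * z * conj z')))

theorem conj_modelKernel (a : ℝ) (z z' : ℂ) :
    conj (modelKernel a z z') = modelKernel a z' z := by
  simp only [modelKernel, map_mul, ← exp_conj, conj_ofReal, map_sub, map_add, map_pow, map_neg,
    map_div₀, map_one, map_ofNat, conj_conj]
  ring_nf

theorem modelKernel_self (a : ℝ) (z : ℂ) : modelKernel a z z = ((a / (2 * π) : ℝ) : ℂ) := by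
  have hzero : ((‖z‖ : ℝ) : ℂ) ^ 2 + ((‖z‖ : ℝ) : ℂ) ^ 2 - 2 * z * conj z = 0 := by
    rw [mul_assoc, mul_conj, normSq_eq_norm_sq]
    push_cast
    ring
  rw [modelKernel, hzero, mul_zero, mul_zero, exp_zero, mul_one]

theorem integral_modelKernel_mul_modelKernel {a : ℝ} (ha : 0 < a) (z z' : ℂ) :
    ∫ w, modelKernel a z w * modelKernel a w z' = modelKernel a z z' := by
  have hsplit : ∀ w, modelKernel a z w * modelKernel a w z' =
      ((a / (2 * π) : ℝ) : ℂ) ^ 2 * cexp (-(a / 4 : ℂ) * (‖z‖ ^ 2 + ‖z'‖ ^ 2)) *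
        cexp (-(a / 2 : ℂ) * ‖w‖ ^ 2 + (a / 2 * conj z') * w + (a / 2 * z) * conj w) := by
    intro w
    rw [modelKernel, modelKernel, mul_mul_mul_comm, ← exp_add, ← sq]
    conv_rhs => rw [mul_assoc, ← exp_add]
    congr 2
    ring
  have hb : 0 < (a / 2 : ℂ).re := by norm_num [ha]
  simp_rw [hsplit, integral_const_mul, integral_cexp_neg_mul_sq_norm_add_mul_add_mul_conj hb]
  have hπ : (π : ℂ) ≠ 0 := ofReal_ne_zero.mpr Real.pi_ne_zero
  have ha' : (a : ℂ) ≠ 0 := ofReal_ne_zero.mpr ha.ne'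
  have hnormalize : ((a / (2 * π) : ℝ) : ℂ) ^ 2 * (π / (a / 2)) = ((a / (2 * π) : ℝ) : ℂ) := by
    push_cast
    field_simp
  rw [mul_mul_mul_comm, hnormalize, ← exp_add, modelKernel]
  congr 2
  field_simp
  ring

/-- the model Bergman kernel on `ℂⁿ` is a self-reproducing, Hermitian
kernel with constant diagonal `∏ aᵢ/(2π)`. -/
theorem stmt_7 (n : ℕ) (a : Fin n → ℝ) (ha : ∀ i, 0 < a i)
    (P : (Fin n → ℂ) → (Fin n → ℂ) → ℂ)
    (hP : ∀ z z' : Fin n → ℂ, P z z' =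
      ((∏ i, a i / (2 * Real.pi) : ℝ) : ℂ) *
        Complex.exp (-(1 / 4 : ℂ) * ∑ i, (a i : ℂ) *
          (((‖z i‖ : ℝ) : ℂ) ^ 2 + ((‖z' i‖ : ℝ) : ℂ) ^ 2
            - 2 * z i * (starRingEnd ℂ) (z' i)))) :
    (∀ z z' : Fin n → ℂ, (∫ w : Fin n → ℂ, P z w * P w z') = P z z') ∧
    (∀ z z' : Fin n → ℂ, (starRingEnd ℂ) (P z z') = P z' z) ∧
    (∀ z : Fin n → ℂ, P z z = ((∏ i, a i / (2 * Real.pi) : ℝ) : ℂ)) ∧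
    (0 < ∏ i, a i / (2 * Real.pi)) := by
  have hP_prod : ∀ z z', P z z' = ∏ i, modelKernel (a i) (z i) (z' i) := by
    intro z z'
    rw [hP, ofReal_prod, Finset.mul_sum, exp_sum, ← Finset.prod_mul_distrib]
    rfl
  refine ⟨fun z z' ↦ ?_, fun z z' ↦ ?_, fun z ↦ ?_, ?_⟩
  · simp_rw [hP_prod, ← Finset.prod_mul_distrib]
    rw [integral_fintype_prod_volume_eq_prod
      (f := fun i w ↦ modelKernel (a i) (z i) w * modelKernel (a i) w (z' i))]
    exact Finset.prod_congr rfl fun i _ ↦ integral_modelKernel_mul_modelKernel (ha i) _ _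
  · simp_rw [hP_prod, map_prod, conj_modelKernel]
  · simp_rw [hP_prod, modelKernel_self, ofReal_prod]
  · exact Finset.prod_pos fun i _ ↦ div_pos (ha i) (by positivity)
end

section
/- Suppose nonnegative quantities satisfy the recursive inequality ‖s‖_{H^{m+1}} ≤ c(‖D s‖_{H^m} + p Σ_{k=0}^{m} ω_k ‖s‖_{H^{m−k}}) for all m ≤ M, where ω_k ≥ 1 are nondecreasing in k, p ≥ 1, and D is a linear operator. Then by induction there exists c' > 0 (depending only on c, M) such that ‖s‖_{H^{m+1}} ≤ c' Σ_{k=0}^{m+1} p^{m+1−k} ‖D^k s‖_{L²} ω_{m−k}^{m−k+1} for all m ≤ M, with the convention ω_{−1}^0 = 1. -/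
/-!
Write `B n` for the weighted sum `∑_{k ≤ n} p^{n-k} ω_{n-k-1}^{n-k} N₀(Dᵏ s)`, so that the claim
is `N_n(s) ≤ c' B n` for `n ≤ M + 1`. By strong induction on `n`, with `q = c (M + 2)`, one shows
`N_n(s) ≤ qⁿ B n`. In the recursive inequality for `N_{m+1}(s)`, the term `N_m(Ds)` is bounded by
`B m` evaluated at `Ds`, which is part of `B (m+1)` at `s`; and each of the `m + 1` terms
`p ω_k N_{m-k}(s)` is bounded by `B (m+1)` because `p ω_k` times the weight of index `j` is at most
the weight of index `j + k + 1`, since `ω` is nondecreasing and `p, ω ≥ 1`.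
-/

open Finset

def bootstrapWeight (p : ℝ) (ω : ℕ → ℝ) : ℕ → ℝ
  | 0 => 1
  | j + 1 => (p * ω j) ^ (j + 1)

def bootstrapBound (p : ℝ) (ω : ℕ → ℝ) (a : ℕ → ℝ) (n : ℕ) : ℝ :=
  ∑ k ∈ range (n + 1), bootstrapWeight p ω (n - k) * a k

section

variable {p : ℝ} {ω : ℕ → ℝ}

theorem bootstrapWeight_nonneg (hp : 0 ≤ p) (hω : ∀ k, 0 ≤ ω k) (j : ℕ) :
    0 ≤ bootstrapWeight p ω j := by
  cases j with
  | zero => exact zero_le_one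
  | succ i => exact pow_nonneg (mul_nonneg hp (hω i)) _

theorem bootstrapWeight_le_pow (hp : 0 ≤ p) (hω : ∀ k, 0 ≤ ω k) (hmono : Monotone ω)
    {j l : ℕ} (hjl : j ≤ l + 1) : bootstrapWeight p ω j ≤ (p * ω l) ^ j := by
  cases j with
  | zero => exact le_rfl
  | succ i =>
    exact pow_le_pow_left₀ (mul_nonneg hp (hω i))
      (mul_le_mul_of_nonneg_left (hmono (by omega)) hp) _

theorem mul_bootstrapWeight_le (hp : 1 ≤ p) (hω : ∀ k, 1 ≤ ω k) (hmono : Monotone ω)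
    (k j : ℕ) : p * ω k * bootstrapWeight p ω j ≤ bootstrapWeight p ω (j + k + 1) := by
  have hω₀ : ∀ k, 0 ≤ ω k := fun k => zero_le_one.trans (hω k)
  set x := p * ω (j + k)
  have hx : 1 ≤ x := one_le_mul_of_one_le_of_one_le hp (hω _)
  calc p * ω k * bootstrapWeight p ω j ≤ x * x ^ j :=
        mul_le_mul (mul_le_mul_of_nonneg_left (hmono (by omega)) (by positivity))
          (bootstrapWeight_le_pow (by positivity) hω₀ hmono (by omega))
          (bootstrapWeight_nonneg (by positivity) hω₀ j) (by positivity)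
    _ = x ^ (j + 1) := (pow_succ' x j).symm
    _ ≤ x ^ (j + k + 1) := pow_le_pow_right₀ hx (by omega)
    _ = bootstrapWeight p ω (j + k + 1) := rfl

theorem bootstrapWeight_sub {m k : ℕ} (hk : k ≤ m + 1) :
    bootstrapWeight p ω (m + 1 - k) =
      p ^ (m + 1 - k) * (if k = m + 1 then 1 else ω (m - k) ^ (m - k + 1)) := by
  rcases hk.eq_or_lt with rfl | hlt
  · simp [bootstrapWeight]
  · rw [if_neg hlt.ne, show m + 1 - k = m - k + 1 by omega, bootstrapWeight, mul_pow]

variable {a : ℕ → ℝ}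

theorem bootstrapBound_zero : bootstrapBound p ω a 0 = a 0 := by
  simp [bootstrapBound, bootstrapWeight]

theorem bootstrapBound_nonneg (hp : 0 ≤ p) (hω : ∀ k, 0 ≤ ω k) (ha : ∀ k, 0 ≤ a k) (n : ℕ) :
    0 ≤ bootstrapBound p ω a n :=
  sum_nonneg fun k _ => mul_nonneg (bootstrapWeight_nonneg hp hω _) (ha k)

theorem bootstrapBound_shift_le (hp : 0 ≤ p) (hω : ∀ k, 0 ≤ ω k) (ha : 0 ≤ a 0) (n : ℕ) :
    bootstrapBound p ω (fun k => a (k + 1)) n ≤ bootstrapBound p ω a (n + 1) := by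
  rw [bootstrapBound, bootstrapBound, sum_range_succ' _ (n + 1)]
  simp only [Nat.add_sub_add_right]
  exact le_add_of_nonneg_right (mul_nonneg (bootstrapWeight_nonneg hp hω _) ha)

theorem mul_bootstrapBound_le (hp : 1 ≤ p) (hω : ∀ k, 1 ≤ ω k) (hmono : Monotone ω)
    (ha : ∀ k, 0 ≤ a k) (k j : ℕ) :
    p * ω k * bootstrapBound p ω a j ≤ bootstrapBound p ω a (j + k + 1) := by
  have hω₀ : ∀ k, 0 ≤ ω k := fun k => zero_le_one.trans (hω k)
  calc p * ω k * bootstrapBound p ω a j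
      = ∑ i ∈ range (j + 1), p * ω k * bootstrapWeight p ω (j - i) * a i := by
        rw [bootstrapBound, mul_sum]
        exact sum_congr rfl fun i _ => (mul_assoc _ _ _).symm
    _ ≤ ∑ i ∈ range (j + 1), bootstrapWeight p ω (j + k + 1 - i) * a i := by
        refine sum_le_sum fun i hi => mul_le_mul_of_nonneg_right ?_ (ha i)
        rw [show j + k + 1 - i = j - i + k + 1 by have := mem_range.1 hi; omega]
        exact mul_bootstrapWeight_le hp hω hmono k (j - i)
    _ ≤ bootstrapBound p ω a (j + k + 1) :=
        sum_le_sum_of_subset_of_nonneg (range_subset_range.2 (by omega))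
          fun i _ _ => mul_nonneg (bootstrapWeight_nonneg (by positivity) hω₀ _) (ha i)

end

theorem bootstrap_step {V : Type*} (D : V → V) (N : ℕ → V → ℝ) {m : ℕ} {c p q : ℝ}
    {ω : ℕ → ℝ} (hc : 0 ≤ c) (hp : 1 ≤ p) (hω : ∀ k, 1 ≤ ω k) (hmono : Monotone ω) (hq : 1 ≤ q)
    (hN : ∀ s, 0 ≤ N 0 s)
    (hrec : ∀ s, N (m + 1) s ≤ c * (N m (D s) + p * ∑ k ∈ range (m + 1), ω k * N (m - k) s))
    (ih : ∀ j ≤ m, ∀ s, N j s ≤ q ^ j * bootstrapBound p ω (fun k => N 0 (D^[k] s)) j) (s : V) :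
    N (m + 1) s ≤ c * (m + 2) * (q ^ m * bootstrapBound p ω (fun k => N 0 (D^[k] s)) (m + 1)) := by
  have hp₀ : 0 ≤ p := zero_le_one.trans hp
  have hω₀ : ∀ k, 0 ≤ ω k := fun k => zero_le_one.trans (hω k)
  have hq₀ : 0 ≤ q := zero_le_one.trans hq
  set B : ℕ → V → ℝ := fun n s => bootstrapBound p ω (fun k => N 0 (D^[k] s)) n
  have hB : ∀ n s, 0 ≤ B n s := fun n s => bootstrapBound_nonneg hp₀ hω₀ (fun k => hN _) n
  have hDs : N m (D s) ≤ q ^ m * B (m + 1) s :=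
    (ih m le_rfl (D s)).trans <| mul_le_mul_of_nonneg_left
      (bootstrapBound_shift_le (a := fun k => N 0 (D^[k] s)) hp₀ hω₀ (hN s) m) (pow_nonneg hq₀ m)
  have hterm : ∀ k ∈ range (m + 1), p * (ω k * N (m - k) s) ≤ q ^ m * B (m + 1) s := by
    intro k hk
    have hkm := mem_range.1 hk
    have hshift : p * ω k * B (m - k) s ≤ B (m + 1) s := by
      simpa only [show m - k + k + 1 = m + 1 by omega] using
        mul_bootstrapBound_le hp hω hmono (fun _ => hN _) k (m - k)
    calc p * (ω k * N (m - k) s) ≤ p * (ω k * (q ^ (m - k) * B (m - k) s)) :=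
          mul_le_mul_of_nonneg_left
            (mul_le_mul_of_nonneg_left (ih (m - k) (by omega) s) (hω₀ k)) hp₀
      _ = q ^ (m - k) * (p * ω k * B (m - k) s) := by ring
      _ ≤ q ^ m * B (m + 1) s :=
          mul_le_mul (pow_le_pow_right₀ hq (by omega)) hshift
            (mul_nonneg (mul_nonneg hp₀ (hω₀ k)) (hB _ s)) (pow_nonneg hq₀ m)
  calc N (m + 1) s ≤ c * (N m (D s) + ∑ k ∈ range (m + 1), p * (ω k * N (m - k) s)) := by
        rw [← mul_sum]; exact hrec s
    _ ≤ c * (q ^ m * B (m + 1) s + ∑ k ∈ range (m + 1), q ^ m * B (m + 1) s) :=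
        mul_le_mul_of_nonneg_left (add_le_add hDs (sum_le_sum hterm)) hc
    _ = c * (m + 2) * (q ^ m * B (m + 1) s) := by
        rw [sum_const, card_range, nsmul_eq_mul]; push_cast; ring

theorem le_pow_mul_bootstrapBound {V : Type*} (D : V → V) (N : ℕ → V → ℝ) {M : ℕ} {c p : ℝ}
    {ω : ℕ → ℝ} (hc : 1 ≤ c) (hp : 1 ≤ p) (hω : ∀ k, 1 ≤ ω k) (hmono : Monotone ω)
    (hN : ∀ s, 0 ≤ N 0 s)
    (hrec : ∀ m ≤ M, ∀ s, N (m + 1) s ≤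
      c * (N m (D s) + p * ∑ k ∈ range (m + 1), ω k * N (m - k) s)) :
    ∀ n ≤ M + 1, ∀ s,
      N n s ≤ (c * (M + 2)) ^ n * bootstrapBound p ω (fun k => N 0 (D^[k] s)) n := by
  have hq : 1 ≤ c * (M + 2) :=
    one_le_mul_of_one_le_of_one_le hc (by linarith [M.cast_nonneg (α := ℝ)])
  intro n
  induction n using Nat.strong_induction_on with
  | _ n ih =>
  intro hn s
  cases n with
  | zero => simp [bootstrapBound_zero]
  | succ m =>
  set B := bootstrapBound p ω (fun k => N 0 (D^[k] s)) (m + 1)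
  have hB : 0 ≤ B := bootstrapBound_nonneg (zero_le_one.trans hp)
    (fun k => zero_le_one.trans (hω k)) (fun k => hN _) (m + 1)
  have hm : (m : ℝ) ≤ M := by exact_mod_cast (by omega : m ≤ M)
  calc N (m + 1) s ≤ c * (m + 2) * ((c * (M + 2)) ^ m * B) :=
        bootstrap_step D N (by positivity) hp hω hmono hq hN (hrec m (by omega))
          (fun j hj => ih j (by omega) (by omega)) s
    _ ≤ c * (M + 2) * ((c * (M + 2)) ^ m * B) := by gcongr
    _ = (c * (M + 2)) ^ (m + 1) * B := by ring

/-- closed form of the elliptic bootstrap: from the recursive inequality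
`N_{m+1}(s) ≤ c(N_m(Ds) + p Σ_{k≤m} ω_k N_{m−k}(s))` one deduces
`N_{m+1}(s) ≤ c' Σ_{k≤m+1} p^{m+1−k} ω_{m−k}^{m−k+1} N₀(Dᵏ s)`
(with the convention `ω_{−1}^0 = 1`), where `c'` depends only on `c` and `M`. -/
theorem stmt_15 (M : ℕ) (c : ℝ) (hc : 1 ≤ c) :
    ∃ c' > 0, ∀ (V : Type) (_ : AddCommGroup V) (_ : Module ℝ V),
      ∀ (D : V →ₗ[ℝ] V) (N : ℕ → V → ℝ) (p : ℝ) (ω : ℕ → ℝ),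
        1 ≤ p → (∀ k, 1 ≤ ω k) → Monotone ω →
        (∀ m (s : V), 0 ≤ N m s) →
        (∀ m ≤ M, ∀ s : V,
          N (m + 1) s ≤ c * (N m (D s) +
            p * ∑ k ∈ Finset.range (m + 1), ω k * N (m - k) s)) →
        ∀ m ≤ M, ∀ s : V,
          N (m + 1) s ≤ c' * ∑ k ∈ Finset.range (m + 2),
            p ^ (m + 1 - k) *
              (if k = m + 1 then 1 else ω (m - k) ^ (m - k + 1)) *
              N 0 ((D ^ k) s) := by
  refine ⟨(c * (M + 2)) ^ (M + 1), by positivity,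
    fun V _ _ D N p ω hp hω hmono hN hrec m hm s => ?_⟩
  have hq : 1 ≤ c * (M + 2) :=
    one_le_mul_of_one_le_of_one_le hc (by linarith [M.cast_nonneg (α := ℝ)])
  set B := bootstrapBound p ω (fun k => N 0 (D^[k] s)) (m + 1) with hB_def
  have hB : 0 ≤ B := bootstrapBound_nonneg (zero_le_one.trans hp)
    (fun k => zero_le_one.trans (hω k)) (fun k => hN 0 _) (m + 1)
  calc N (m + 1) s ≤ (c * (M + 2)) ^ (m + 1) * B :=
        le_pow_mul_bootstrapBound D N hc hp hω hmono (hN 0) hrec (m + 1) (by omega) s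
    _ ≤ (c * (M + 2)) ^ (M + 1) * B :=
        mul_le_mul_of_nonneg_right (pow_le_pow_right₀ hq (by omega)) hB
    _ = _ := by
        rw [hB_def, bootstrapBound]
        refine congrArg _ (sum_congr rfl fun k hk => ?_)
        rw [bootstrapWeight_sub (Nat.lt_succ_iff.1 (mem_range.1 hk)), Module.End.pow_apply]
end
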